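/- arXiv:math/0404318 — 4 statements merged into one kernel-verified Lean document; each statement's English description precedes it below -/
import Mathlib

section
/- Assume θ·ℵ₀ < κ (cardinal product) and |P_θ(μ)| < κ for every cardinal μ < κ. Then P_κ(λ) ∉ ∇^{[λ]^{<θ}} I_{κ,λ}. -/
/-!
Suppose `P_κ(λ)` is covered by `{a | a ∩ θ = ∅}` and the sets `B_e ∩ {a | e ∈ P_{|a∩θ|}(a)}`,
and let `w_e ∈ P_κ(λ)` witness that `B_e` is not cofinal. Pick a regular `ν` with `θ ≤ ν < κ`:
this is possible because `θ·ℵ₀ < κ`, and when `κ = θ⁺` the cardinal `θ` is regular, since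
otherwise König's theorem gives `|P_θ(θ)| ≥ θ^{cf θ} > θ`. Closing `{0}` under `e ↦ w_e` for
`e` of size `< θ` along a continuous chain of length `ν` yields `a ∈ P_κ(λ)`: each stage has
size `< κ` because `|P_θ(μ)| < κ` for `μ < κ`, and by regularity of `ν` every `e ⊆ a` of size
`< θ` already lies in some stage, so `w_e ⊆ a`. As `0 ∈ a ∩ θ`, the set `a` must belong to some
`B_e` with `e ⊆ a`, which contradicts `w_e ⊆ a`.
-/

open Cardinal Set

namespace PklNormal

/-- `P_κ(l)`: the collection of subsets of (the set of ordinals below) `l`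
of cardinality `< κ`. -/
def PSet (κ : Cardinal.{0}) (l : Ordinal.{0}) : Set (Set Ordinal.{0}) :=
  {a | a ⊆ Set.Iio l ∧ #↥a < Cardinal.lift.{1} κ}

/-- `e ∈ P_{|a ∩ σ|}(a ∩ γ)`. -/
def inP (σ : Cardinal.{0}) (γ : Ordinal.{0}) (a e : Set Ordinal.{0}) : Prop :=
  e ⊆ a ∩ Set.Iio γ ∧ #↥e < #↥(a ∩ Set.Iio σ.ord)

/-- The collection `I_{κ,l}` of non-cofinal subsets of `P_κ(l)`. -/
def Ikl (κ : Cardinal.{0}) (l : Ordinal.{0}) : Set (Set (Set Ordinal.{0})) :=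
  {B | B ⊆ PSet κ l ∧ ∃ a ∈ PSet κ l, ∀ b ∈ B, ¬ a ⊆ b}

/-- An ideal on `P_κ(l)`. -/
structure IsIdeal (κ : Cardinal.{0}) (l : Ordinal.{0})
    (K : Set (Set (Set Ordinal.{0}))) : Prop where
  mem_subset : ∀ B ∈ K, B ⊆ PSet κ l
  subset_mem : ∀ B ∈ K, ∀ C ⊆ B, C ∈ K
  sUnion_mem : ∀ Y ⊆ K, Y.Nonempty → #↥Y < Cardinal.lift.{1} κ → ⋃₀ Y ∈ K
  nonCofinal_subset : Ikl κ l ⊆ K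
  univ_not_mem : PSet κ l ∉ K

/-- `K⁺`: the subsets of `P_κ(l)` not in `K`. -/
def plus (κ : Cardinal.{0}) (l : Ordinal.{0}) (K : Set (Set (Set Ordinal.{0}))) :
    Set (Set (Set Ordinal.{0})) :=
  {B | B ⊆ PSet κ l ∧ B ∉ K}

/-- `K*`: the subsets of `P_κ(l)` whose complement is in `K`. -/
def star (κ : Cardinal.{0}) (l : Ordinal.{0}) (K : Set (Set (Set Ordinal.{0}))) :
    Set (Set (Set Ordinal.{0})) :=
  {B | B ⊆ PSet κ l ∧ PSet κ l \ B ∈ K}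

/-- `K|A`. -/
def restrict (κ : Cardinal.{0}) (l : Ordinal.{0}) (K : Set (Set (Set Ordinal.{0})))
    (A : Set (Set Ordinal.{0})) : Set (Set (Set Ordinal.{0})) :=
  {B | B ⊆ PSet κ l ∧ B ∩ A ∈ K}

/-- `∇^{[γ]^{<σ}} J`. -/
def nabla (κ : Cardinal.{0}) (l : Ordinal.{0}) (σ : Cardinal.{0}) (γ : Ordinal.{0})
    (J : Set (Set (Set Ordinal.{0}))) : Set (Set (Set Ordinal.{0})) :=
  {B | ∃ F : Set Ordinal.{0} → Set (Set Ordinal.{0}),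
    (∀ e ∈ PSet σ γ, F e ∈ J) ∧
    B ⊆ {a | a ∈ PSet κ l ∧ a ∩ Set.Iio σ.ord = ∅} ∪
      ⋃ e ∈ PSet σ γ, {a | a ∈ F e ∧ inP σ γ a e}}

/-- `J` is `[γ]^{<σ}`-normal. -/
def IsNormal (κ : Cardinal.{0}) (l : Ordinal.{0}) (σ : Cardinal.{0}) (γ : Ordinal.{0})
    (J : Set (Set (Set Ordinal.{0}))) : Prop :=
  J = nabla κ l σ γ J

def IsNormalIdeal (κ : Cardinal.{0}) (l : Ordinal.{0}) (σ : Cardinal.{0}) (γ : Ordinal.{0})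
    (J : Set (Set (Set Ordinal.{0}))) : Prop :=
  IsIdeal κ l J ∧ IsNormal κ l σ γ J

/-- `N` is the smallest `[γ]^{<σ}`-normal ideal on `P_κ(l)`. -/
def IsLeastNormalIdeal (κ : Cardinal.{0}) (l : Ordinal.{0}) (σ : Cardinal.{0}) (γ : Ordinal.{0})
    (N : Set (Set (Set Ordinal.{0}))) : Prop :=
  IsNormalIdeal κ l σ γ N ∧ ∀ J, IsNormalIdeal κ l σ γ J → N ⊆ J

/-- `∇^δ K`, the ordinal-indexed diagonal union. -/
def nablaOrd (κ : Cardinal.{0}) (l : Ordinal.{0}) (δ : Ordinal.{0})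
    (K : Set (Set (Set Ordinal.{0}))) : Set (Set (Set Ordinal.{0})) :=
  {B | ∃ F : Ordinal.{0} → Set (Set Ordinal.{0}),
    (∀ α < δ, F α ∈ K) ∧
    B ⊆ {a | a ∈ PSet κ l ∧ (0 : Ordinal) ∉ a} ∪
      ⋃ α ∈ Set.Iio δ, {a | a ∈ F α ∧ α ∈ a}}

/-- `J` is `δ`-normal. -/
def IsOrdNormal (κ : Cardinal.{0}) (l : Ordinal.{0}) (δ : Ordinal.{0})
    (J : Set (Set (Set Ordinal.{0}))) : Prop :=
  J = nablaOrd κ l δ J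

/-- `θ̄`: equals `θ` if `θ < κ`, or if `θ = κ` and `κ` is a limit cardinal;
equals `ν` if `θ = κ = ν⁺`. -/
noncomputable def thetaBar (κ θ : Cardinal.{0}) : Cardinal.{0} :=
  haveI := Classical.propDecidable (θ < κ ∨ Order.IsSuccLimit κ)
  if θ < κ ∨ Order.IsSuccLimit κ then θ else sSup {ν | Order.succ ν = κ}

/-- `cof(K)`: the least number of generators of `K`. -/
noncomputable def cofIdeal (K : Set (Set (Set Ordinal.{0}))) : Cardinal.{1} :=
  sInf {c | ∃ S ⊆ K, #↥S = c ∧ ∀ B ∈ K, ∃ C ∈ S, B ⊆ C}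

/-- The dominating number `𝔡^μ_{κ,l}`. -/
noncomputable def dNum (κ : Cardinal.{0}) (l : Ordinal.{0}) (μ : Cardinal.{1}) : Cardinal.{1} :=
  sInf {c | ∃ F : Set (μ.ord.ToType → Set Ordinal.{0}),
    #↥F = c ∧ (∀ f ∈ F, ∀ i, f i ∈ PSet κ l) ∧
    ∀ g : μ.ord.ToType → Set Ordinal.{0}, (∀ i, g i ∈ PSet κ l) →
      ∃ f ∈ F, ∀ i, g i ⊆ f i}

/-- `u(ρ,μ)`: the least cardinality of a cofinal subset of `(P_ρ(μ), ⊆)`. -/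
noncomputable def uNum (ρ μ : Cardinal.{0}) : Cardinal.{1} :=
  sInf {c | ∃ X ⊆ PSet ρ μ.ord, #↥X = c ∧ ∀ e ∈ PSet ρ μ.ord, ∃ x ∈ X, e ⊆ x}

/-- `cov(lam, ν, ν, 2)`: the least cardinality of an `X ⊆ P_ν(lam)` such that every
member of `P_ν(lam)` is contained in a member of `X`. -/
noncomputable def covNum (lam ν : Cardinal.{0}) : Cardinal.{1} :=
  sInf {c | ∃ X ⊆ PSet ν lam.ord, #↥X = c ∧ ∀ e ∈ PSet ν lam.ord, ∃ x ∈ X, e ⊆ x}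

/-- `C` is closed unbounded in `l`. -/
def IsClubIn (C : Set Ordinal.{0}) (l : Ordinal.{0}) : Prop :=
  C ⊆ Set.Iio l ∧ (∀ p < l, ∃ q ∈ C, p < q) ∧
    (∀ o < l, Order.IsSuccLimit o → (∀ p < o, ∃ q ∈ C, p < q ∧ q < o) → o ∈ C)

/-- `κ` is a Mahlo cardinal: the set of regular cardinals below `κ` is stationary in `κ`. -/
def IsMahlo (κ : Cardinal.{0}) : Prop :=
  ∀ C : Set Ordinal.{0}, IsClubIn C κ.ord →
    ∃ o ∈ C, ∃ ρ : Cardinal.{0}, ρ.IsRegular ∧ ρ.ord = o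

end PklNormal

universe u

namespace Cardinal

variable {α : Type u}

lemma mk_setOf_subset_card_lt_le {s t : Set α} {c : Cardinal.{u}} (h : #s ≤ #t) :
    #{e | e ⊆ s ∧ #e < c} ≤ #{e | e ⊆ t ∧ #e < c} := by
  obtain ⟨j⟩ := h
  set k : s → α := Subtype.val ∘ j
  have hk : Function.Injective k := Subtype.val_injective.comp j.injective
  have hcard : ∀ e ⊆ s, #(k '' (Subtype.val ⁻¹' e)) = #e := fun e he => by
    rw [mk_image_eq hk, mk_preimage_of_injective_of_subset_range _ _ Subtype.val_injective
      (by rwa [Subtype.range_coe])]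
  refine mk_le_of_injective (f := fun e => ⟨k '' (Subtype.val ⁻¹' e.1), ?_, ?_⟩) ?_
  · rintro _ ⟨x, _, rfl⟩; exact (j x).2
  · exact (hcard e.1 e.2.1).trans_lt e.2.2
  · intro e₁ e₂ he
    have hpre := hk.image_injective (congrArg Subtype.val he)
    exact Subtype.ext ((preimage_eq_preimage' (by rw [Subtype.range_coe]; exact e₁.2.1)
      (by rw [Subtype.range_coe]; exact e₂.2.1)).mp hpre)

/-- A function `c → s` is encoded by its graph, carried into `s` by a bijection `s × s ≃ s`. -/
lemma power_le_mk_setOf_subset_card_lt {s : Set α} {c d : Cardinal.{u}} (hs : ℵ₀ ≤ #s)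
    (hcd : c < d) (hd : d ≤ #s) : #s ^ c ≤ #{e | e ⊆ s ∧ #e < d} := by
  obtain ⟨j⟩ : Nonempty (c.out ↪ s) := by
    rw [← le_def, mk_out]; exact hcd.le.trans hd
  obtain ⟨pair⟩ : Nonempty (s × s ≃ s) := by
    rw [← Cardinal.eq, mk_prod, lift_id, mul_eq_self hs]
  set graph : (c.out → s) → Set α := fun f => Subtype.val '' range fun i => pair (j i, f i)
  rw [show #s ^ c = #(c.out → s) by rw [← power_def, mk_out]]
  refine mk_le_of_injective (f := fun f => ⟨graph f, ?_, ?_⟩) ?_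
  · rintro _ ⟨x, _, rfl⟩; exact x.2
  · calc #(graph f) ≤ #(range fun i => pair (j i, f i)) := mk_image_le
      _ ≤ #c.out := mk_range_le
      _ < d := by rwa [mk_out]
  · intro f₁ f₂ hf
    funext i
    have hgraph : graph f₁ = graph f₂ := congrArg Subtype.val hf
    have hi : (pair (j i, f₁ i) : α) ∈ graph f₂ := hgraph ▸ ⟨_, ⟨i, rfl⟩, rfl⟩
    obtain ⟨_, ⟨i', rfl⟩, hi'⟩ := hi
    have := pair.injective (Subtype.val_injective hi')
    rw [Prod.mk.injEq, j.injective.eq_iff] at this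
    obtain ⟨rfl, h⟩ := this
    exact h.symm

lemma exists_isRegular_mem_Ico {θ κ : Cardinal.{u}} (hθ : θ ≠ 0) (hθκ : θ * ℵ₀ < κ)
    (hreg : ℵ₀ < θ → Order.succ θ = κ → θ.IsRegular) :
    ∃ ν, ν.IsRegular ∧ θ ≤ ν ∧ ν < κ := by
  have hθκ' : θ < κ := (le_mul_of_one_le_right zero_le one_le_aleph0).trans_lt hθκ
  rcases le_or_gt θ ℵ₀ with hθω | hθω
  · exact ⟨ℵ₀, isRegular_aleph0, hθω,
      (le_mul_of_one_le_left zero_le (Cardinal.one_le_iff_ne_zero.mpr hθ)).trans_lt hθκ⟩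
  rcases (Order.succ_le_of_lt hθκ').lt_or_eq with hsucc | hsucc
  · exact ⟨Order.succ θ, isRegular_succ hθω.le, Order.le_succ θ, hsucc⟩
  · exact ⟨θ, hreg hθω hsucc, le_rfl, hθκ'⟩

end Cardinal

namespace Set
section TransfiniteIteration

variable {α : Type u}

def transfiniteIter (g : Set α → Set α) (s : Set α) (o : Ordinal.{u}) : Set α :=
  s ∪ ⋃ (β) (_ : β < o), g (transfiniteIter g s β)
termination_by o

variable {g : Set α → Set α} {s : Set α}

lemma transfiniteIter_eq (o : Ordinal.{u}) :
    transfiniteIter g s o = s ∪ ⋃ (β) (_ : β < o), g (transfiniteIter g s β) := by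
  rw [transfiniteIter]

lemma subset_transfiniteIter (o : Ordinal.{u}) : s ⊆ transfiniteIter g s o := by
  rw [transfiniteIter_eq]; exact subset_union_left

lemma apply_transfiniteIter_subset {β o : Ordinal.{u}} (h : β < o) :
    g (transfiniteIter g s β) ⊆ transfiniteIter g s o := by
  rw [transfiniteIter_eq o]
  exact (subset_biUnion_of_mem (u := fun β => g (transfiniteIter g s β)) h).trans
    subset_union_right

lemma transfiniteIter_mono : Monotone (transfiniteIter g s) := by
  intro o o' h
  rw [transfiniteIter_eq o]
  exact union_subset (subset_transfiniteIter o')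
    (iUnion₂_subset fun β hβ => apply_transfiniteIter_subset (hβ.trans_le h))

lemma transfiniteIter_subset {t : Set α} (hs : s ⊆ t) (hg : ∀ b, g b ⊆ t) (o : Ordinal.{u}) :
    transfiniteIter g s o ⊆ t := by
  rw [transfiniteIter_eq]
  exact union_subset hs (iUnion₂_subset fun β _ => hg _)

lemma exists_lt_of_mem_transfiniteIter {o : Ordinal.{u}} (ho : Order.IsSuccLimit o) {x : α}
    (hx : x ∈ transfiniteIter g s o) : ∃ β < o, x ∈ transfiniteIter g s β := by
  rw [transfiniteIter_eq] at hx
  obtain hxs | hxg := hx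
  · exact ⟨0, ho.bot_lt, subset_transfiniteIter 0 hxs⟩
  · obtain ⟨β, hβ, hx⟩ := mem_iUnion₂.mp hxg
    exact ⟨Order.succ β, ho.succ_lt hβ, apply_transfiniteIter_subset (Order.lt_succ β) hx⟩

lemma exists_lt_subset_transfiniteIter {o : Ordinal.{u}} (ho : Order.IsSuccLimit o)
    {e : Set α} (he : e ⊆ transfiniteIter g s o) (hcard : #e < o.cof) :
    ∃ β < o, e ⊆ transfiniteIter g s β := by
  choose stage hlt hmem using fun x (hx : x ∈ e) => exists_lt_of_mem_transfiniteIter ho (he hx)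
  refine ⟨⨆ x : e, stage x x.2, Ordinal.iSup_lt_of_lt_cof hcard fun x => hlt x x.2,
    fun x hx => ?_⟩
  exact transfiniteIter_mono (Ordinal.le_iSup (fun x : e => stage x x.2) ⟨x, hx⟩) (hmem x hx)

lemma mk_biUnion_lt_of_isRegular {κ : Cardinal.{u}} (hκ : κ.IsRegular) {o : Ordinal.{u}}
    (ho : o < κ.ord) {A : Ordinal.{u} → Set α} (hA : ∀ β < o, #(A β) < κ) :
    #(⋃ (β) (_ : β < o), A β) < κ := by
  have hunion : ⋃ (β) (_ : β < o), A β = ⋃ i : o.ToType, A (Ordinal.ToType.mk.symm i) := by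
    ext x
    simp only [mem_iUnion, exists_prop]
    exact ⟨fun ⟨β, hβ, hx⟩ => ⟨Ordinal.ToType.mk ⟨β, hβ⟩, by simpa using hx⟩,
      fun ⟨i, hx⟩ => ⟨_, (Ordinal.ToType.mk.symm i).2, hx⟩⟩
  rw [hunion, card_iUnion_lt_iff_forall_of_isRegular hκ (by rwa [mk_toType, ← lt_ord])]
  exact fun i => hA _ (Ordinal.ToType.mk.symm i).2

lemma mk_transfiniteIter_lt {κ : Cardinal.{u}} (hκ : κ.IsRegular) (hs : #s < κ)
    (hg : ∀ b : Set α, #b < κ → #(g b) < κ) {o : Ordinal.{u}} (ho : o < κ.ord) :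
    #(transfiniteIter g s o) < κ := by
  induction o using WellFoundedLT.induction with
  | _ o ih =>
    rw [transfiniteIter_eq]
    exact (mk_union_le _ _).trans_lt (add_lt_of_lt hκ.aleph0_le hs
      (mk_biUnion_lt_of_isRegular hκ ho fun β hβ => hg _ (ih β hβ (hβ.trans ho))))

end TransfiniteIteration

section SmallClosure

variable {α : Type u}

def smallHull (w : Set α → Set α) (θ : Cardinal.{u}) (b : Set α) : Set α :=
  ⋃ e ∈ {e | e ⊆ b ∧ #e < θ}, w e

theorem exists_small_closed_superset {κ ν θ : Cardinal.{u}} (hκ : κ.IsRegular)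
    (hν : ν.IsRegular) (hθν : θ ≤ ν) (hνκ : ν < κ) {w : Set α → Set α} {s t : Set α}
    (hs : #s < κ) (hw : ∀ e, #(w e) < κ)
    (hsub : ∀ b : Set α, #b < κ → #{e | e ⊆ b ∧ #e < θ} < κ)
    (hst : s ⊆ t) (hwt : ∀ e, w e ⊆ t) :
    ∃ a, s ⊆ a ∧ a ⊆ t ∧ #a < κ ∧ ∀ e ⊆ a, #e < θ → w e ⊆ a := by
  set g := smallHull w θ
  have hg : ∀ b : Set α, #b < κ → #(g b) < κ := fun b hb =>
    (card_biUnion_lt_iff_forall_of_isRegular hκ (hsub b hb)).mpr fun e _ => hw e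
  refine ⟨transfiniteIter g s ν.ord, subset_transfiniteIter _,
    transfiniteIter_subset hst (fun b => iUnion₂_subset fun e _ => hwt e) _,
    mk_transfiniteIter_lt hκ hs hg (ord_lt_ord.mpr hνκ), fun e he hcard => ?_⟩
  obtain ⟨β, hβ, heβ⟩ := exists_lt_subset_transfiniteIter (isSuccLimit_ord hν.aleph0_le) he
    (by rw [hν.cof_ord]; exact hcard.trans_le hθν)
  have hmem : e ∈ {e | e ⊆ transfiniteIter g s β ∧ #e < θ} := ⟨heβ, hcard⟩
  exact (subset_biUnion_of_mem (u := w) hmem).trans (apply_transfiniteIter_subset (g := g) hβ)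

end SmallClosure

end Set

namespace PklNormal

lemma mk_setOf_subset_card_lt_lt_of_forall_mk_PSet_lt {κ θ : Cardinal.{0}}
    (hP : ∀ μ : Cardinal.{0}, μ < κ → #↥(PSet θ μ.ord) < Cardinal.lift.{1} κ)
    {b : Set Ordinal.{0}} (hb : #b < Cardinal.lift.{1} κ) :
    #{e | e ⊆ b ∧ #e < Cardinal.lift.{1} θ} < Cardinal.lift.{1} κ := by
  obtain ⟨μ, hμκ, hμ⟩ := lt_lift_iff.mp hb
  refine (mk_setOf_subset_card_lt_le (t := Iio μ.ord) ?_).trans_lt (hP μ hμκ)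
  rw [mk_Iio_ordinal, card_ord, hμ]

lemma isRegular_of_mk_PSet_self_lt_succ {θ : Cardinal.{0}} (hθ : ℵ₀ ≤ θ)
    (h : #↥(PSet θ θ.ord) < Cardinal.lift.{1} (Order.succ θ)) : θ.IsRegular := by
  refine ⟨hθ, not_lt.mp fun hsing => ?_⟩
  have hIio : #(Iio θ.ord) = Cardinal.lift.{1} θ := by rw [mk_Iio_ordinal, card_ord]
  have hpow := power_le_mk_setOf_subset_card_lt (s := Iio θ.ord) (by simpa [hIio] using hθ)
    (lift_lt.mpr hsing) hIio.ge
  rw [hIio, ← lift_power] at hpow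
  rw [lift_succ, Order.lt_succ_iff] at h
  exact (lt_power_cof_ord hθ).not_ge (lift_le.mp (hpow.trans h))

theorem stmt9_general (κ lam θ : Cardinal.{0})
    (hκ : κ.IsRegular) (hkl : κ ≤ lam) (hθ2 : 2 ≤ θ)
    (hθω : θ * ℵ₀ < κ)
    (hP : ∀ μ : Cardinal.{0}, μ < κ → #↥(PSet θ μ.ord) < Cardinal.lift.{1} κ) :
    PSet κ lam.ord ∉ nabla κ lam.ord θ lam.ord (Ikl κ lam.ord) := by
  rintro ⟨F, hF, hcov⟩
  have hwit : ∀ e, ∃ c ∈ PSet κ lam.ord, e ∈ PSet θ lam.ord → ∀ b ∈ F e, ¬ c ⊆ b := fun e => by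
    by_cases he : e ∈ PSet θ lam.ord
    · obtain ⟨-, c, hc, hcb⟩ := hF e he
      exact ⟨c, hc, fun _ => hcb⟩
    · exact ⟨∅, ⟨empty_subset _, by simpa using hκ.pos⟩, fun h => (he h).elim⟩
  choose w hwP hw using hwit
  have hθ0 : θ ≠ 0 := (two_pos.trans_le hθ2).ne'
  obtain ⟨ν, hν, hθν, hνκ⟩ := exists_isRegular_mem_Ico hθ0 hθω fun hθ hsucc => by
    subst hsucc
    exact isRegular_of_mk_PSet_self_lt_succ hθ.le (hP θ (Order.lt_succ θ))
  obtain ⟨a, h0a, hat, haκ, hclosed⟩ := exists_small_closed_superset hκ.lift hν.lift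
    (lift_le.mpr hθν) (lift_lt.mpr hνκ) (s := {0}) (t := Iio lam.ord) (by simpa using hκ.nat_lt 1)
    (fun e => (hwP e).2) (fun b hb => mk_setOf_subset_card_lt_lt_of_forall_mk_PSet_lt hP hb)
    (singleton_subset_iff.mpr (ord_pos.mpr (hκ.pos.trans_le hkl))) (fun e => (hwP e).1)
  rcases hcov ⟨hat, haκ⟩ with ⟨-, hempty⟩ | hmem
  · exact hempty.subset ⟨h0a rfl, ord_pos.mpr hθ0.bot_lt⟩
  · obtain ⟨e, heP, haF, hea, -⟩ := mem_iUnion₂.mp hmem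
    exact hw e heP a haF (hclosed e (fun x hx => (hea hx).1) heP.2)

/-- Assume `θ·ℵ₀ < κ` and `|P_θ(μ)| < κ` for every cardinal `μ < κ`.
Then `P_κ(λ) ∉ ∇^{[λ]^{<θ}} I_{κ,λ}`. -/
theorem stmt9 (κ lam θ : Cardinal.{0})
    (hκ : κ.IsRegular) (hkl : κ ≤ lam) (hθ2 : 2 ≤ θ) (hθκ : θ ≤ κ)
    (hθω : θ * ℵ₀ < κ)
    (hP : ∀ μ : Cardinal.{0}, μ < κ → #↥(PSet θ μ.ord) < Cardinal.lift.{1} κ) :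
    PSet κ lam.ord ∉ nabla κ lam.ord θ lam.ord (Ikl κ lam.ord) :=
  stmt9_general κ lam θ hκ hkl hθ2 hθω hP

end PklNormal
end

section
/- Assume κ > ω and κ ≤ δ < κ⁺. Then the smallest [δ]^{<2}-normal ideal on P_κ(λ) equals ∇^{[δ]^{<2}} I_{κ,λ}. -/
open Cardinal Set

namespace PklNormal

/-!
A set `B` lies in `∇^{[δ]^{<2}} I_{κ,λ}` exactly when some `c : P_2(δ) → P_κ(λ)` has no
`c`-closed member of `B` meeting `2`, where `b` is `c`-closed if `c e ⊆ b` whenever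
`e ∈ P_{|b ∩ 2|}(b ∩ δ)`. Closing `{0}` under `c` in `ω` steps gives a `c`-closed set in
`P_κ(λ)` (this is where `κ > ω` enters), so the ideal is proper, and a union of fewer than `κ`
sets is handled by the union of their witnesses.

The heart of the matter is `∇ ∇ I ⊆ ∇ I`. Given witnesses `d e` for the sets `F e`, a single
`c` must make every `c`-closed `b` also `d e`-closed whenever `e ∈ P_{|b ∩ 2|}(b ∩ δ)`. As
`|δ| ≤ κ`, an injective rank `r : δ → κ` leaves fewer than `κ` ordinals of rank at most `r x`,
so `c {x}` can absorb `d e e'` for all `e, e'` of rank at most `r x`. If `b` is `c`-closed and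
`e, e' ∈ P_{|b ∩ 2|}(b ∩ δ)`, the element of `e ∪ e'` of largest rank lies in `b`, hence
`d e e' ⊆ b`.
-/

section PSet

variable {κ : Cardinal.{0}} {l : Ordinal.{0}}

lemma subset_mem_PSet {x y : Set Ordinal.{0}} (h : y ⊆ x) (hx : x ∈ PSet κ l) : y ∈ PSet κ l :=
  ⟨h.trans hx.1, (mk_le_mk_of_subset h).trans_lt hx.2⟩

lemma singleton_mem_PSet (hκ : ℵ₀ ≤ κ) {x : Ordinal.{0}} (hx : x < l) :
    ({x} : Set Ordinal.{0}) ∈ PSet κ l :=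
  ⟨by simpa using hx, by simpa using one_lt_aleph0.trans_le (aleph0_le_lift.{0, 1}.2 hκ)⟩

lemma union_mem_PSet (hκ : ℵ₀ ≤ κ) {x y : Set Ordinal.{0}}
    (hx : x ∈ PSet κ l) (hy : y ∈ PSet κ l) : x ∪ y ∈ PSet κ l :=
  ⟨union_subset hx.1 hy.1,
    (mk_union_le x y).trans_lt (add_lt_of_lt (aleph0_le_lift.2 hκ) hx.2 hy.2)⟩

lemma iUnion_mem_PSet (hκ : κ.IsRegular) {ι : Type 1} {f : ι → Set Ordinal.{0}}
    (hι : #ι < lift.{1} κ) (h : ∀ i, f i ∈ PSet κ l) : (⋃ i, f i) ∈ PSet κ l :=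
  ⟨iUnion_subset fun i => (h i).1,
    (card_iUnion_lt_iff_forall_of_isRegular hκ.lift hι).2 fun i => (h i).2⟩

lemma mem_PSet_two_iff {e : Set Ordinal.{0}} : e ∈ PSet 2 l ↔ e ⊆ Iio l ∧ e.Subsingleton := by
  rw [PSet, mem_ofPred_eq, lift_ofNat, ← not_le, two_le_iff]
  simp [Set.Subsingleton, Subtype.ext_iff]

end PSet

section InP

variable {σ : Cardinal.{0}} {γ : Ordinal.{0}} {a e e' : Set Ordinal.{0}}

lemma inP.mono (h : inP σ γ a e') (he : e ⊆ e') : inP σ γ a e :=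
  ⟨he.trans h.1, (mk_le_mk_of_subset he).trans_lt h.2⟩

lemma inP_empty_iff : inP σ γ a ∅ ↔ (a ∩ Iio σ.ord).Nonempty := by
  simp [inP, pos_iff_ne_zero, nonempty_iff_ne_empty, mk_eq_zero_iff]

def IsClosedUnder (σ : Cardinal.{0}) (γ : Ordinal.{0}) (c : Set Ordinal.{0} → Set Ordinal.{0})
    (b : Set Ordinal.{0}) : Prop :=
  ∀ e ∈ PSet σ γ, inP σ γ b e → c e ⊆ b

lemma IsClosedUnder.mono {c c' : Set Ordinal.{0} → Set Ordinal.{0}} {b : Set Ordinal.{0}}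
    (h : IsClosedUnder σ γ c b) (hc : ∀ e ∈ PSet σ γ, c' e ⊆ c e) : IsClosedUnder σ γ c' b :=
  fun e he hb => (hc e he).trans (h e he hb)

end InP

section Nabla

variable {κ : Cardinal.{0}} {l : Ordinal.{0}} {σ : Cardinal.{0}} {γ : Ordinal.{0}}
  {J J' : Set (Set (Set Ordinal.{0}))} {B : Set (Set Ordinal.{0})}

lemma mem_nabla_iff : B ∈ nabla κ l σ γ J ↔ ∃ F : Set Ordinal.{0} → Set (Set Ordinal.{0}),
    (∀ e ∈ PSet σ γ, F e ∈ J) ∧ ∀ b ∈ B,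
      (b ∈ PSet κ l ∧ b ∩ Iio σ.ord = ∅) ∨ ∃ e ∈ PSet σ γ, b ∈ F e ∧ inP σ γ b e := by
  simp only [nabla, subset_def, mem_union, mem_iUnion, mem_ofPred_eq, exists_prop]

lemma nabla_mono (h : J ⊆ J') : nabla κ l σ γ J ⊆ nabla κ l σ γ J' :=
  fun _ ⟨F, hF, hB⟩ => ⟨F, fun e he => h (hF e he), hB⟩

lemma mem_nabla_of_subset {C : Set (Set Ordinal.{0})} (hB : B ∈ nabla κ l σ γ J) (hC : C ⊆ B) :
    C ∈ nabla κ l σ γ J :=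
  let ⟨F, hF, hB⟩ := hB; ⟨F, hF, hC.trans hB⟩

lemma subset_PSet_of_mem_nabla (hJ : ∀ A ∈ J, A ⊆ PSet κ l) (hB : B ∈ nabla κ l σ γ J) :
    B ⊆ PSet κ l := by
  obtain ⟨F, hF, hB⟩ := mem_nabla_iff.1 hB
  intro b hb
  rcases hB b hb with ⟨hbP, -⟩ | ⟨e, he, hbe, -⟩
  exacts [hbP, hJ _ (hF e he) hbe]

lemma mem_nabla_Ikl_iff : B ∈ nabla κ l σ γ (Ikl κ l) ↔ B ⊆ PSet κ l ∧
    ∃ c : Set Ordinal.{0} → Set Ordinal.{0}, (∀ e ∈ PSet σ γ, c e ∈ PSet κ l) ∧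
      ∀ b ∈ B, (b ∩ Iio σ.ord).Nonempty → ¬ IsClosedUnder σ γ c b := by
  constructor
  · intro hB
    have hBP := subset_PSet_of_mem_nabla (fun A hA => hA.1) hB
    obtain ⟨F, hF, hB⟩ := mem_nabla_iff.1 hB
    choose! c hcP hc using fun e he => (hF e he).2
    refine ⟨hBP, c, hcP, fun b hb hne hcl => ?_⟩
    rcases hB b hb with ⟨-, hb0⟩ | ⟨e, he, hbe, hbe'⟩
    · exact hne.ne_empty hb0
    · exact hc e he b hbe (hcl e he hbe')
  · rintro ⟨hBP, c, hcP, hc⟩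
    refine mem_nabla_iff.2 ⟨fun e => {y | y ∈ PSet κ l ∧ ¬ c e ⊆ y},
      fun e he => ⟨fun y hy => hy.1, c e, hcP e he, fun y hy => hy.2⟩, fun b hb => ?_⟩
    rcases (b ∩ Iio σ.ord).eq_empty_or_nonempty with hb0 | hne
    · exact Or.inl ⟨hBP hb, hb0⟩
    · simp only [IsClosedUnder, not_forall] at hc
      obtain ⟨e, he, hbe, hce⟩ := hc b hb hne
      exact Or.inr ⟨e, he, ⟨hBP hb, hce⟩, hbe⟩

lemma Ikl_subset_nabla_Ikl (hσ : σ ≠ 0) : Ikl κ l ⊆ nabla κ l σ γ (Ikl κ l) := by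
  rintro B ⟨hBP, a, haP, ha⟩
  refine mem_nabla_Ikl_iff.2 ⟨hBP, fun _ => a, fun _ _ => haP, fun b hb hne hcl => ?_⟩
  have hempty : ∅ ∈ PSet σ γ := ⟨empty_subset _, by simpa [pos_iff_ne_zero] using hσ⟩
  exact ha b hb (hcl ∅ hempty (inP_empty_iff.2 hne))

lemma sUnion_mem_nabla_Ikl (hκ : κ.IsRegular) {Y : Set (Set (Set Ordinal.{0}))}
    (hY : Y ⊆ nabla κ l σ γ (Ikl κ l)) (hYκ : #Y < lift.{1} κ) :
    ⋃₀ Y ∈ nabla κ l σ γ (Ikl κ l) := by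
  choose hYP c hcP hc using fun A : Y => mem_nabla_Ikl_iff.1 (hY A.2)
  refine mem_nabla_Ikl_iff.2 ⟨sUnion_subset fun A hA => hYP ⟨A, hA⟩, fun e => ⋃ A : Y, c A e,
    fun e he => iUnion_mem_PSet hκ hYκ fun A => hcP A e he, ?_⟩
  rintro b ⟨A, hA, hbA⟩ hne hcl
  exact hc ⟨A, hA⟩ b hbA hne (hcl.mono fun e _ => subset_iUnion (fun A : Y => c A e) ⟨A, hA⟩)

end Nabla

section Closure

variable {κ : Cardinal.{0}} {l γ : Ordinal.{0}}

lemma exists_superset_forall_mem_subset (hκ : κ.IsRegular) (hω : ℵ₀ < κ) {a : Set Ordinal.{0}}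
    (ha : a ∈ PSet κ l) (f : Ordinal.{0} → Set Ordinal.{0}) (hf : ∀ α, f α ∈ PSet κ l) :
    ∃ b ∈ PSet κ l, a ⊆ b ∧ ∀ α ∈ b, f α ⊆ b := by
  let s : ℕ → Set Ordinal.{0} := fun n => Nat.rec a (fun _ t => t ∪ ⋃ α : t, f α) n
  have hs : ∀ n, s n ∈ PSet κ l := by
    intro n
    induction n with
    | zero => exact ha
    | succ n ih => exact union_mem_PSet hκ.1 ih (iUnion_mem_PSet hκ ih.2 fun α => hf α)
  have hω' : #(ULift.{1} ℕ) < lift.{1} κ := by simpa using hω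
  refine ⟨⋃ n : ULift.{1} ℕ, s n.down, iUnion_mem_PSet hκ hω' fun n => hs n.down,
    subset_iUnion_of_subset ⟨0⟩ subset_rfl, fun α hα => ?_⟩
  obtain ⟨n, hn⟩ := mem_iUnion.1 hα
  have hα' : f α ⊆ s (n.down + 1) :=
    subset_union_of_subset_right (subset_iUnion (fun β : s n.down => f β.1) ⟨α, hn⟩) _
  exact hα'.trans (subset_iUnion (fun m : ULift.{1} ℕ => s m.down) ⟨n.down + 1⟩)

lemma exists_isClosedUnder (hκ : κ.IsRegular) (hω : ℵ₀ < κ) (hl : 0 < l)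
    {c : Set Ordinal.{0} → Set Ordinal.{0}} (hc : ∀ e ∈ PSet 2 γ, c e ∈ PSet κ l) :
    ∃ b ∈ PSet κ l, (b ∩ Iio (2 : Cardinal).ord).Nonempty ∧ IsClosedUnder 2 γ c b := by
  have hP2 : ∀ e ⊆ Iio γ, e.Subsingleton → c e ∈ PSet κ l :=
    fun e he he' => hc e (mem_PSet_two_iff.2 ⟨he, he'⟩)
  obtain ⟨b, hbP, hab, hb⟩ := exists_superset_forall_mem_subset hκ hω
    (union_mem_PSet hκ.1 (singleton_mem_PSet hκ.1 hl) (hP2 ∅ (empty_subset _) subsingleton_empty))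
    (fun α => c ({α} ∩ Iio γ))
    (fun α => hP2 _ inter_subset_right (subsingleton_singleton.anti inter_subset_left))
  refine ⟨b, hbP, ⟨0, hab (Or.inl rfl), ord_pos.2 two_pos⟩, fun e he hbe => ?_⟩
  rcases (mem_PSet_two_iff.1 he).2.eq_empty_or_singleton with rfl | ⟨α, rfl⟩
  · exact subset_union_right.trans hab
  · obtain ⟨hαb, hαγ⟩ := hbe.1 rfl
    simpa [inter_eq_left.2 (singleton_subset_iff.2 hαγ)] using hb α hαb

lemma PSet_not_mem_nabla_Ikl (hκ : κ.IsRegular) (hω : ℵ₀ < κ) (hl : 0 < l) :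
    PSet κ l ∉ nabla κ l 2 γ (Ikl κ l) := by
  intro h
  obtain ⟨-, c, hc, hB⟩ := mem_nabla_Ikl_iff.1 h
  obtain ⟨b, hbP, hne, hcl⟩ := exists_isClosedUnder hκ hω hl hc
  exact hB b hbP hne hcl

end Closure

section Diagonal

variable {κ : Cardinal.{0}} {l γ : Ordinal.{0}}

lemma exists_rank (hκ : ℵ₀ ≤ κ) (hγ : γ.card ≤ κ) :
    ∃ r : Ordinal.{0} → Ordinal.{0}, ∀ x < γ, {α | α < γ ∧ r α ≤ r x} ∈ PSet κ γ := by
  classical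
  obtain ⟨f⟩ : Nonempty (Iio γ ↪ Iio κ.ord) := by
    rw [← le_def, mk_Iio_ordinal, mk_Iio_ordinal, card_ord]
    exact lift_le.2 hγ
  let r (α : Ordinal.{0}) : Ordinal.{0} := if h : α < γ then f ⟨α, h⟩ else 0
  have hr : ∀ {α} (h : α < γ), r α = f ⟨α, h⟩ := fun h => dif_pos h
  refine ⟨r, fun x hx => ⟨fun α hα => hα.1, ?_⟩⟩
  let g : {α | α < γ ∧ r α ≤ r x} → Iic (r x) := fun α => ⟨r α, α.2.2⟩
  have hg : Function.Injective g := fun α β h => by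
    have h' : r α = r β := congrArg Subtype.val h
    rw [hr α.2.1, hr β.2.1] at h'
    exact Subtype.ext (congrArg Subtype.val (f.injective (Subtype.ext h')) :)
  have hfx : (r x).card < κ := lt_ord.1 (hr hx ▸ (f ⟨x, hx⟩).2)
  refine (mk_le_of_injective hg).trans_lt ?_
  rw [← Order.Iio_succ, Order.succ_eq_add_one, mk_Iio_ordinal, Ordinal.card_add_one, lift_lt]
  exact add_lt_of_lt hκ hfx (one_lt_aleph0.trans_le hκ)

lemma exists_subset_union_subset_biUnion_rank_le (r : Ordinal.{0} → Ordinal.{0})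
    {e₁ e₂ : Set Ordinal.{0}} (h₁ : e₁ ∈ PSet 2 γ) (h₂ : e₂ ∈ PSet 2 γ) :
    ∃ e, (e ⊆ e₁ ∨ e ⊆ e₂) ∧ e₁ ∪ e₂ ⊆ ⋃ x ∈ e, {α | α < γ ∧ r α ≤ r x} := by
  rw [mem_PSet_two_iff] at h₁ h₂
  rcases (e₁ ∪ e₂).eq_empty_or_nonempty with h | hne
  · exact ⟨∅, Or.inl (empty_subset _), h.subset.trans (empty_subset _)⟩
  · obtain ⟨x, hx, hmax⟩ := exists_max_image _ r (h₁.2.finite.union h₂.2.finite) hne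
    refine ⟨{x}, hx.imp singleton_subset_iff.2 singleton_subset_iff.2, fun α hα => ?_⟩
    rw [biUnion_singleton]
    exact ⟨union_subset h₁.1 h₂.1 hα, hmax α hα⟩

lemma exists_isClosedUnder_diagonal (hκ : κ.IsRegular) (hω : ℵ₀ < κ) (hγ : γ.card ≤ κ)
    {d : Set Ordinal.{0} → Set Ordinal.{0} → Set Ordinal.{0}}
    (hd : ∀ e ∈ PSet 2 γ, ∀ e' ∈ PSet 2 γ, d e e' ∈ PSet κ l) :
    ∃ c : Set Ordinal.{0} → Set Ordinal.{0}, (∀ e ∈ PSet 2 γ, c e ∈ PSet κ l) ∧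
      ∀ b, IsClosedUnder 2 γ c b → ∀ e ∈ PSet 2 γ, inP 2 γ b e → IsClosedUnder 2 γ (d e) b := by
  obtain ⟨r, hr⟩ := exists_rank hκ.1 hγ
  let below (e : Set Ordinal.{0}) : Set Ordinal.{0} := ⋃ x ∈ e, {α | α < γ ∧ r α ≤ r x}
  have hbelow : ∀ e ∈ PSet 2 γ, below e ∈ PSet κ γ := by
    intro e he
    simp only [below, biUnion_eq_iUnion]
    have h2κ : (2 : Cardinal.{0}) ≤ κ := (natCast_lt_aleph0 (n := 2)).le.trans hκ.1
    exact iUnion_mem_PSet hκ (he.2.trans_le (lift_le.2 h2κ)) fun x => hr x (he.1 x.2)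
  let small (e : Set Ordinal.{0}) := {t : Set Ordinal.{0} // t ⊆ below e ∧ #t ≤ 1}
  refine ⟨fun e => ⋃ (t₁ : small e) (t₂ : small e), d t₁ t₂, fun e he => ?_, ?_⟩
  · have hsmall : #(small e) < lift.{1} κ := by
      refine (mk_bounded_subset_le _ _).trans_lt ?_
      rw [power_one]
      exact max_lt (hbelow e he).2 (by simpa using hω)
    have hmem : ∀ t : small e, t.1 ∈ PSet 2 γ := fun t =>
      ⟨t.2.1.trans (hbelow e he).1, by simpa using t.2.2.trans_lt one_lt_two⟩
    exact iUnion_mem_PSet hκ hsmall fun t₁ =>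
      iUnion_mem_PSet hκ hsmall fun t₂ => hd _ (hmem t₁) _ (hmem t₂)
  · intro b hcl e₁ he₁ hb₁ e₂ he₂ hb₂
    obtain ⟨e, hee, hsub⟩ := exists_subset_union_subset_biUnion_rank_le r he₁ he₂
    have he : e ∈ PSet 2 γ := hee.elim (subset_mem_PSet · he₁) (subset_mem_PSet · he₂)
    have hbe : inP 2 γ b e := hee.elim hb₁.mono hb₂.mono
    have hle : ∀ {t}, t ∈ PSet 2 γ → #t ≤ 1 := fun ht =>
      mk_le_one_iff_set_subsingleton.2 (mem_PSet_two_iff.1 ht).2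
    let t₁ : small e := ⟨e₁, subset_union_left.trans hsub, hle he₁⟩
    let t₂ : small e := ⟨e₂, subset_union_right.trans hsub, hle he₂⟩
    exact (subset_iUnion₂ (s := fun (t₁ t₂ : small e) => d t₁ t₂) t₁ t₂).trans (hcl e he hbe)

lemma nabla_nabla_Ikl_subset (hκ : κ.IsRegular) (hω : ℵ₀ < κ) (hγ : γ.card ≤ κ) :
    nabla κ l 2 γ (nabla κ l 2 γ (Ikl κ l)) ⊆ nabla κ l 2 γ (Ikl κ l) := by
  intro B hB
  have hBP := subset_PSet_of_mem_nabla (fun A hA => (mem_nabla_Ikl_iff.1 hA).1) hB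
  obtain ⟨F, hF, hB⟩ := mem_nabla_iff.1 hB
  choose! _ d hdP hd using fun e he => mem_nabla_Ikl_iff.1 (hF e he)
  obtain ⟨c, hcP, hc⟩ := exists_isClosedUnder_diagonal hκ hω hγ hdP
  refine mem_nabla_Ikl_iff.2 ⟨hBP, c, hcP, fun b hb hne hcl => ?_⟩
  rcases hB b hb with ⟨-, hb0⟩ | ⟨e, he, hbe, hbe'⟩
  · exact hne.ne_empty hb0
  · exact hd e he b hbe hne (hc b hcl e he hbe')

end Diagonal

theorem stmt13_general (κ lam : Cardinal.{0}) (δ : Ordinal.{0})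
    (hκ : κ.IsRegular) (hκω : ℵ₀ < κ) (hkl : κ ≤ lam)
    (hδκ : δ < (Order.succ κ).ord) :
    IsLeastNormalIdeal κ lam.ord 2 δ (nabla κ lam.ord 2 δ (Ikl κ lam.ord)) := by
  have hδ : δ.card ≤ κ := Order.lt_succ_iff.1 (lt_ord.1 hδκ)
  have hlam : 0 < lam.ord := ord_pos.2 (hκ.pos.trans_le hkl)
  have hIkl : Ikl κ lam.ord ⊆ nabla κ lam.ord 2 δ (Ikl κ lam.ord) :=
    Ikl_subset_nabla_Ikl two_ne_zero
  refine ⟨⟨⟨fun B hB => (mem_nabla_Ikl_iff.1 hB).1, fun B hB C hC => mem_nabla_of_subset hB hC,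
    fun Y hY _ hYκ => sUnion_mem_nabla_Ikl hκ hY hYκ, hIkl, PSet_not_mem_nabla_Ikl hκ hκω hlam⟩,
    (nabla_mono hIkl).antisymm (nabla_nabla_Ikl_subset hκ hκω hδ)⟩, fun J hJ => ?_⟩
  exact (nabla_mono hJ.1.nonCofinal_subset).trans hJ.2.symm.subset

/-- Assume `κ > ω` and `κ ≤ δ < κ⁺`. Then the smallest `[δ]^{<2}`-normal ideal
on `P_κ(λ)` equals `∇^{[δ]^{<2}} I_{κ,λ}`. -/
theorem stmt13 (κ lam : Cardinal.{0}) (δ : Ordinal.{0})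
    (hκ : κ.IsRegular) (hκω : ℵ₀ < κ) (hkl : κ ≤ lam)
    (hκδ : κ.ord ≤ δ) (hδκ : δ < (Order.succ κ).ord) (hdl : δ ≤ lam.ord) :
    IsLeastNormalIdeal κ lam.ord 2 δ (nabla κ lam.ord 2 δ (Ikl κ lam.ord)) :=
  stmt13_general κ lam δ hκ hκω hkl hδκ

end PklNormal
end

section
/- Assume δ ≥ κ and θ is a limit cardinal, and let J be an ideal on P_κ(λ). Then J is [δ]^{<θ}-normal if and only if J is [δ]^{<ρ}-normal for every cardinal ρ with 2 ≤ ρ < θ. -/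
open Cardinal Set

namespace PklNormal

/-!
Shrinking `σ` only removes indices `e` and weakens the requirement `|e| < |a ∩ σ|`, so
`[δ]^{<θ}`-normality implies `[δ]^{<ρ}`-normality for `ρ ≤ θ`. For the converse, let `F`
witness `B ∈ ∇^{[δ]^{<θ}} J`. To each `ζ < θ` attach the level `ρ_ζ = (|ζ| ⊔ 2)⁺`, which is
`< θ` because `θ` is a limit, and the set `H_ζ` of those `a` which either omit an ordinal below
`ρ_ζ` or lie in the `[δ]^{<ρ_ζ}`-diagonal union of `F`; `H_ζ ∈ J` by `ρ_ζ`-normality. If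
`a ∈ F e` with `|e| < |a ∩ θ|`, some `ζ ∈ a ∩ θ` has `|e| ≤ |ζ|`, and then `a ∈ H_ζ`: if
`ρ_ζ ⊆ a` then `|a ∩ ρ_ζ| = ρ_ζ > |e|`. Finally `[δ]^{<2}`-normality puts the diagonal union
`{a | ∃ ζ ∈ a ∩ θ, a ∈ H_ζ}` in `J`.
-/

section

variable {κ : Cardinal.{0}} {l : Ordinal.{0}} {J : Set (Set (Set Ordinal.{0}))}

lemma mem_PSet_of_finite (hκ : ℵ₀ ≤ κ) {c : Set Ordinal.{0}} (hc : c.Finite)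
    (hcl : c ⊆ Iio l) : c ∈ PSet κ l :=
  ⟨hcl, hc.lt_aleph0.trans_le (by simpa using lift_le.{1}.2 hκ)⟩

lemma Iio_ord_mem_PSet {ρ : Cardinal.{0}} (hρκ : ρ < κ) (hρl : ρ.ord ≤ l) :
    Iio ρ.ord ∈ PSet κ l :=
  ⟨Iio_subset_Iio hρl, by rwa [mk_Iio_ordinal, card_ord, lift_lt]⟩

lemma inP_mono {σ ρ : Cardinal.{0}} {γ : Ordinal.{0}} {a e : Set Ordinal.{0}}
    (h : inP ρ γ a e) (hρσ : ρ ≤ σ) : inP σ γ a e :=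
  ⟨h.1, h.2.trans_le <| mk_le_mk_of_subset <|
    inter_subset_inter_right a (Iio_subset_Iio (ord_le_ord.2 hρσ))⟩

lemma inP_of_Iio_subset {σ ρ : Cardinal.{0}} {γ : Ordinal.{0}} {a e : Set Ordinal.{0}}
    (h : inP σ γ a e) (hρa : Iio ρ.ord ⊆ a) (he : #e < lift.{1} ρ) : inP ρ γ a e := by
  refine ⟨h.1, ?_⟩
  rwa [inter_eq_right.2 hρa, mk_Iio_ordinal, card_ord]

lemma exists_mem_le_card {m : Cardinal.{0}} {s : Set Ordinal.{0}}
    (h : lift.{1} m < #s) : ∃ ζ ∈ s, m ≤ ζ.card := by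
  by_contra! hs
  have hsub : s ⊆ Iio m.ord := fun ζ hζ => lt_ord.2 (hs ζ hζ)
  have := mk_le_mk_of_subset hsub
  rw [mk_Iio_ordinal, card_ord] at this
  exact this.not_gt h

namespace IsIdeal

lemma empty_mem (hJ : IsIdeal κ l J) (hκ : 0 < κ) : (∅ : Set (Set Ordinal.{0})) ∈ J :=
  hJ.nonCofinal_subset ⟨empty_subset _, ∅, ⟨empty_subset _, by simpa using hκ⟩, by simp⟩

lemma union_mem (hJ : IsIdeal κ l J) (hκ : ℵ₀ ≤ κ) {B C : Set (Set Ordinal.{0})}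
    (hB : B ∈ J) (hC : C ∈ J) : B ∪ C ∈ J := by
  rw [← sUnion_pair]
  refine hJ.sUnion_mem _ (pair_subset hB hC) (insert_nonempty _ _) ?_
  exact (toFinite _).lt_aleph0.trans_le (by simpa using lift_le.{1}.2 hκ)

lemma biUnion_mem (hJ : IsIdeal κ l J) {s : Set Ordinal.{0}} (hs : #s < lift.{1} κ)
    {H : Ordinal.{0} → Set (Set Ordinal.{0})} (hH : ∀ ζ ∈ s, H ζ ∈ J) :
    (⋃ ζ ∈ s, H ζ) ∈ J := by
  rcases s.eq_empty_or_nonempty with rfl | hne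
  · simpa using hJ.empty_mem (by simpa using pos_of_gt hs)
  rw [← sUnion_image]
  exact hJ.sUnion_mem _ (image_subset_iff.2 hH) (hne.image H) (mk_image_le.trans_lt hs)

lemma setOf_not_subset_mem (hJ : IsIdeal κ l J) {c : Set Ordinal.{0}} (hc : c ∈ PSet κ l) :
    {b | b ∈ PSet κ l ∧ ¬ c ⊆ b} ∈ J :=
  hJ.nonCofinal_subset ⟨fun _ hb => hb.1, c, hc, fun _ hb => hb.2⟩

end IsIdeal

def diagUnion (κ : Cardinal.{0}) (l : Ordinal.{0}) (σ : Cardinal.{0}) (γ : Ordinal.{0})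
    (F : Set Ordinal.{0} → Set (Set Ordinal.{0})) : Set (Set Ordinal.{0}) :=
  {a | a ∈ PSet κ l ∧ a ∩ Iio σ.ord = ∅} ∪ ⋃ e ∈ PSet σ γ, {a | a ∈ F e ∧ inP σ γ a e}

variable {σ : Cardinal.{0}} {γ : Ordinal.{0}}

lemma mem_diagUnion {F : Set Ordinal.{0} → Set (Set Ordinal.{0})} {a : Set Ordinal.{0}} :
    a ∈ diagUnion κ l σ γ F ↔
      (a ∈ PSet κ l ∧ a ∩ Iio σ.ord = ∅) ∨ ∃ e ∈ PSet σ γ, a ∈ F e ∧ inP σ γ a e := by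
  simp only [diagUnion, mem_union, mem_ofPred_eq, mem_iUnion, exists_prop]

lemma IsNormal.diagUnion_mem (hN : IsNormal κ l σ γ J)
    {F : Set Ordinal.{0} → Set (Set Ordinal.{0})} (hF : ∀ e ∈ PSet σ γ, F e ∈ J) :
    diagUnion κ l σ γ F ∈ J :=
  hN ▸ ⟨F, hF, subset_rfl⟩

lemma IsIdeal.subset_nabla (hJ : IsIdeal κ l J) (hσ : 0 < σ) : J ⊆ nabla κ l σ γ J := by
  intro B hB
  refine ⟨fun _ => B, fun _ _ => hB, fun a ha => ?_⟩
  by_cases h : a ∩ Iio σ.ord = ∅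
  · exact Or.inl ⟨hJ.mem_subset B hB ha, h⟩
  · refine Or.inr (mem_biUnion (x := ∅) ⟨empty_subset _, by simpa using hσ⟩
      ⟨ha, empty_subset _, ?_⟩)
    obtain ⟨x, hxa, hxσ⟩ := nonempty_iff_ne_empty.2 h
    simpa [pos_iff_ne_zero, mk_ne_zero_iff] using ⟨x, hxa, hxσ⟩

-- The part of `B` where `a ∩ σ = ∅` is harmless: there `0 ∉ a`, a non-cofinal condition.
lemma IsIdeal.isNormal_of_forall_exists (hJ : IsIdeal κ l J) (hκ : ℵ₀ ≤ κ) (hl : 0 < l)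
    (hσ : 0 < σ)
    (h : ∀ F : Set Ordinal.{0} → Set (Set Ordinal.{0}), (∀ e ∈ PSet σ γ, F e ∈ J) →
      ∃ C ∈ J, ∀ e ∈ PSet σ γ, ∀ a ∈ F e, inP σ γ a e → a ∈ C) :
    IsNormal κ l σ γ J := by
  refine (hJ.subset_nabla hσ).antisymm ?_
  rintro B ⟨F, hF, hB⟩
  obtain ⟨C, hC, hFC⟩ := h F hF
  have h0 : ({0} : Set Ordinal.{0}) ∈ PSet κ l :=
    mem_PSet_of_finite hκ (finite_singleton 0) (by simpa using hl)
  refine hJ.subset_mem _ (hJ.union_mem hκ (hJ.setOf_not_subset_mem h0) hC) B fun a haB => ?_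
  rcases mem_diagUnion.1 (hB haB) with ⟨haP, ha⟩ | ⟨e, he, haF, hae⟩
  · refine Or.inl ⟨haP, fun h0a => ?_⟩
    exact eq_empty_iff_forall_notMem.1 ha 0 ⟨singleton_subset_iff.1 h0a, ord_pos.2 hσ⟩
  · exact Or.inr (hFC e he a haF hae)

lemma IsNormal.mono (hJ : IsIdeal κ l J) (hκ : ℵ₀ ≤ κ) (hl : 0 < l) {ρ : Cardinal.{0}}
    (hρ : 0 < ρ) (hρσ : ρ ≤ σ) (hN : IsNormal κ l σ γ J) : IsNormal κ l ρ γ J := by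
  classical
  refine hJ.isNormal_of_forall_exists hκ hl hρ fun F hF => ?_
  let F' e := if e ∈ PSet ρ γ then F e else ∅
  have hF' : ∀ e ∈ PSet σ γ, F' e ∈ J := fun e _ => by
    unfold F'
    split_ifs with he
    · exact hF e he
    · exact hJ.empty_mem (aleph0_pos.trans_le hκ)
  refine ⟨_, hN.diagUnion_mem hF', fun e he a haF hae => ?_⟩
  exact mem_diagUnion.2 (Or.inr ⟨e, ⟨he.1, he.2.trans_le (lift_le.2 hρσ)⟩,
    by simpa [F', he] using haF, inP_mono hae hρσ⟩)

lemma IsNormal.setOf_exists_mem_mem (hJ : IsIdeal κ l J) (hκ : ℵ₀ ≤ κ) (hl : 1 < l)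
    (hN : IsNormal κ l 2 γ J) {S : Set Ordinal.{0}} (hS : S ⊆ Iio γ)
    {H : Ordinal.{0} → Set (Set Ordinal.{0})} (hH : ∀ ζ ∈ S, H ζ ∈ J) :
    {a | ∃ ζ ∈ a ∩ S, a ∈ H ζ} ∈ J := by
  have hκ2 : lift.{1} (2 : Cardinal.{0}) ≤ lift.{1} κ :=
    lift_le.2 ((natCast_lt_aleph0 (n := 2)).le.trans hκ)
  have hG : ∀ e ∈ PSet 2 γ, (⋃ ζ ∈ e ∩ S, H ζ) ∈ J := fun e he =>
    hJ.biUnion_mem ((mk_le_mk_of_subset inter_subset_left).trans_lt (he.2.trans_le hκ2))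
      fun ζ hζ => hH ζ hζ.2
  have h01 : ({0, 1} : Set Ordinal.{0}) ∈ PSet κ l :=
    mem_PSet_of_finite hκ (toFinite _) (by simp [insert_subset_iff, hl, zero_lt_one.trans hl])
  refine hJ.subset_mem _
    (hJ.union_mem hκ (hJ.setOf_not_subset_mem h01) (hN.diagUnion_mem hG)) _ ?_
  rintro a ⟨ζ, ⟨hζa, hζS⟩, haH⟩
  by_cases ha01 : {0, 1} ⊆ a
  swap
  · exact Or.inl ⟨hJ.mem_subset _ (hH ζ hζS) haH, ha01⟩
  -- `{ζ}` is an admissible index at `a` for `σ = 2` exactly when `{0, 1} ⊆ a`.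
  have hsize : #({ζ} : Set Ordinal.{0}) < #↥(a ∩ Iio (2 : Cardinal.{0}).ord) := by
    rw [mk_singleton, one_lt_iff_nontrivial, ord_ofNat]
    exact ⟨⟨0, ha01 (by simp), by norm_num⟩, ⟨1, ha01 (by simp), by norm_num⟩,
      by simp [Subtype.ext_iff]⟩
  exact Or.inr (mem_diagUnion.2 (Or.inr ⟨{ζ}, ⟨singleton_subset_iff.2 (hS hζS), by simp⟩,
    mem_biUnion ⟨rfl, hζS⟩ haH, singleton_subset_iff.2 ⟨hζa, hS hζS⟩, hsize⟩))

lemma isNormal_of_forall_lt (hJ : IsIdeal κ l J) (hκ : ℵ₀ ≤ κ) {θ : Cardinal.{0}}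
    (hθ : Order.IsSuccLimit θ) (hθκ : θ ≤ κ) (hθl : θ.ord ≤ l) (hθγ : θ.ord ≤ γ)
    (hN : ∀ ρ : Cardinal.{0}, 2 ≤ ρ → ρ < θ → IsNormal κ l ρ γ J) : IsNormal κ l θ γ J := by
  classical
  have h2θ : (2 : Cardinal.{0}) < θ :=
    (natCast_lt_aleph0 (n := 2)).trans_le (aleph0_le_of_isSuccLimit hθ)
  have h1l : 1 < l := (lt_ord.2 (by simpa using Cardinal.one_lt_two.trans h2θ)).trans_le hθl
  refine hJ.isNormal_of_forall_exists hκ (zero_lt_one.trans h1l) (two_pos.trans h2θ) fun F hF => ?_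
  let ρ : Ordinal.{0} → Cardinal.{0} := fun ζ => Order.succ (ζ.card ⊔ 2)
  have hρθ : ∀ ζ < θ.ord, ρ ζ < θ := fun ζ hζ => hθ.succ_lt (max_lt (lt_ord.1 hζ) h2θ)
  let H ζ := {b | b ∈ PSet κ l ∧ ¬ Iio (ρ ζ).ord ⊆ b} ∪ diagUnion κ l (ρ ζ) γ F
  have hH : ∀ ζ ∈ Iio θ.ord, H ζ ∈ J := fun ζ hζ =>
    hJ.union_mem hκ
      (hJ.setOf_not_subset_mem <| Iio_ord_mem_PSet ((hρθ ζ hζ).trans_le hθκ)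
        ((ord_le_ord.2 (hρθ ζ hζ).le).trans hθl))
      ((hN _ (le_sup_right.trans (Order.le_succ _)) (hρθ ζ hζ)).diagUnion_mem
        fun e he => hF e ⟨he.1, he.2.trans (lift_lt.2 (hρθ ζ hζ))⟩)
  refine ⟨_, (hN 2 le_rfl h2θ).setOf_exists_mem_mem hJ hκ h1l (Iio_subset_Iio hθγ) hH,
    fun e he a haF hae => ?_⟩
  obtain ⟨m, hm⟩ := mem_range_lift_of_le he.2.le
  obtain ⟨ζ, hζ, hmζ⟩ := exists_mem_le_card (hm ▸ hae.2)
  have hmρ : #e < lift (ρ ζ) :=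
    hm ▸ lift_lt.2 (hmζ.trans_lt (le_sup_left.trans_lt (Order.lt_succ _)))
  refine ⟨ζ, hζ, ?_⟩
  by_cases hρa : Iio (ρ ζ).ord ⊆ a
  · exact Or.inr (mem_diagUnion.2 (Or.inr ⟨e, ⟨he.1, hmρ⟩, haF, inP_of_Iio_subset hae hρa hmρ⟩))
  · exact Or.inl ⟨hJ.mem_subset _ (hF e he) haF, hρa⟩

end

theorem stmt15_general (κ lam θ : Cardinal.{0}) (δ : Ordinal.{0})
    (hκ : κ.IsRegular) (hkl : κ ≤ lam) (hθκ : θ ≤ κ)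
    (hθlim : Order.IsSuccLimit θ)
    (hκδ : κ.ord ≤ δ)
    (J : Set (Set (Set Ordinal.{0}))) (hJ : IsIdeal κ lam.ord J) :
    IsNormal κ lam.ord θ δ J ↔
      ∀ ρ : Cardinal.{0}, 2 ≤ ρ → ρ < θ → IsNormal κ lam.ord ρ δ J := by
  have hκ0 : ℵ₀ ≤ κ := hκ.aleph0_le
  have hl : 0 < lam.ord := ord_pos.2 (aleph0_pos.trans_le (hκ0.trans hkl))
  have hθl : θ.ord ≤ lam.ord := ord_le_ord.2 (hθκ.trans hkl)
  exact ⟨fun hN ρ hρ hρθ => hN.mono hJ hκ0 hl (two_pos.trans_le hρ) hρθ.le,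
    isNormal_of_forall_lt hJ hκ0 hθlim hθκ hθl ((ord_le_ord.2 hθκ).trans hκδ)⟩

/-- Assume `δ ≥ κ` and `θ` is a limit cardinal, and let `J` be an ideal on
`P_κ(λ)`. Then `J` is `[δ]^{<θ}`-normal iff `J` is `[δ]^{<ρ}`-normal for every cardinal `ρ`
with `2 ≤ ρ < θ`. -/
theorem stmt15 (κ lam θ : Cardinal.{0}) (δ : Ordinal.{0})
    (hκ : κ.IsRegular) (hkl : κ ≤ lam) (hθ2 : 2 ≤ θ) (hθκ : θ ≤ κ)
    (hθlim : Order.IsSuccLimit θ)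
    (hδ1 : 1 ≤ δ) (hdl : δ ≤ lam.ord) (hκδ : κ.ord ≤ δ)
    (J : Set (Set (Set Ordinal.{0}))) (hJ : IsIdeal κ lam.ord J) :
    IsNormal κ lam.ord θ δ J ↔
      ∀ ρ : Cardinal.{0}, 2 ≤ ρ → ρ < θ → IsNormal κ lam.ord ρ δ J :=
  stmt15_general κ lam θ δ hκ hkl hθκ hθlim hκδ J hJ

end PklNormal
end

section
/- Let μ be a nonzero cardinal. Then (0) 𝔡^μ_{κ,λ} ≤ 𝔡^μ_{κ,ρ} · 𝔡^μ_{ρ⁺,λ} ≤ 𝔡^{μ·ρ}_{κ,λ} for every cardinal ρ with κ ≤ ρ < λ, and (1) 𝔡^μ_{κ,λ} ≤ 𝔡^μ_{κ,ρ} · 𝔡^μ_{ρ,λ} ≤ 𝔡^{μ·ρ}_{κ,λ} for every regular cardinal ρ with κ ≤ ρ ≤ λ. -/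
open Cardinal Set

namespace PklNormal

/-!
`𝔡^μ_{κ,λ}` is the cofinality of the pointwise-`⊆` order on `μ → P_κ(λ)`, and each inequality
comes from a map between dominating families. For the first inequalities, a value of size `≤ ρ`
is coded into `ρ` by an injection, so a dominating family for `P_σ(λ)` combined with one for
`P_κ(ρ)` dominates `P_κ(λ)`. For the second, the factor `𝔡^μ_{κ,ρ}` is handled by restriction,
while a function into `P_{ρ⁺}(λ)` is spread over `μ·ρ` coordinates, one singleton per code, and
recovered from a dominating function by unions of `ρ` sets of size `< κ`. When `ρ` is regular
one extra coordinate per `i` carries an ordinal bound `o < ρ` on the codes, so that only `< ρ`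
coordinates are joined. The product is then absorbed because `𝔡^{μ·ρ}_{κ,λ}` is infinite.
-/

section Coding

variable {κ ρ : Cardinal.{0}} {l : Ordinal.{0}}

theorem mem_PSet_of_subsingleton {s : Set Ordinal.{0}} (hκ : 1 < κ) (hs : s ⊆ Iio l)
    (hsub : s.Subsingleton) : s ∈ PSet κ l :=
  ⟨hs, (mk_le_one_iff_set_subsingleton.2 hsub).trans_lt (by simpa using hκ)⟩

theorem nonempty_embedding_Iio_ord {α : Type 1} (h : #α ≤ Cardinal.lift.{1} ρ) :
    Nonempty (α ↪ Iio ρ.ord) := by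
  rwa [← Cardinal.le_def, Cardinal.mk_Iio_ordinal, card_ord]

theorem exists_embedding_Iio_ord_bounded {α : Type 1} (h : #α < Cardinal.lift.{1} ρ) :
    ∃ o < ρ.ord, ∃ e : α ↪ Iio ρ.ord, ∀ x, (e x : Ordinal) < o := by
  obtain ⟨c, hc, hα⟩ := Cardinal.lt_lift_iff.1 h
  obtain ⟨e⟩ := nonempty_embedding_Iio_ord (ρ := c) hα.ge
  have hcρ : c.ord < ρ.ord := ord_lt_ord.2 hc
  exact ⟨c.ord, hcρ, e.trans (embeddingOfSubset _ _ (Iio_subset_Iio hcρ.le)),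
    fun x => (e x).2⟩

theorem image_val_preimage_singleton_mem_PSet {s : Set Ordinal.{0}} {β : Type*} (hκ : 1 < κ)
    (hs : s ⊆ Iio l) (e : s ↪ β) (b : β) : Subtype.val '' (e ⁻¹' {b}) ∈ PSet κ l :=
  mem_PSet_of_subsingleton hκ ((Subtype.coe_image_subset _ _).trans hs)
    ((subsingleton_singleton.preimage e.injective).image _)

end Coding

section Dominating

universe u

variable {ι ι' : Type u} {κ κ' : Cardinal.{0}} {l l' : Ordinal.{0}}

def IsDominating (κ : Cardinal.{0}) (l : Ordinal.{0}) (F : Set (ι → Set Ordinal.{0})) : Prop :=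
  (∀ f ∈ F, ∀ i, f i ∈ PSet κ l) ∧
    ∀ g : ι → Set Ordinal.{0}, (∀ i, g i ∈ PSet κ l) → ∃ f ∈ F, ∀ i, g i ⊆ f i

/-- `dNum κ l μ` unfolds to `domNum κ l μ.ord.ToType`. -/
noncomputable def domNum (κ : Cardinal.{0}) (l : Ordinal.{0}) (ι : Type u) : Cardinal.{max u 1} :=
  sInf {c | ∃ F : Set (ι → Set Ordinal.{0}), #F = c ∧ IsDominating κ l F}

theorem domNum_le_mk {F : Set (ι → Set Ordinal.{0})} (hF : IsDominating κ l F) :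
    domNum κ l ι ≤ #F :=
  csInf_le' ⟨F, rfl, hF⟩

theorem exists_isDominating_mk_eq_domNum (κ : Cardinal.{0}) (l : Ordinal.{0}) (ι : Type u) :
    ∃ F : Set (ι → Set Ordinal.{0}), IsDominating κ l F ∧ #F = domNum κ l ι := by
  obtain ⟨F, hF, hdom⟩ := csInf_mem (s := {c | ∃ F : Set (ι → Set Ordinal.{0}),
    #F = c ∧ IsDominating κ l F})
    ⟨_, {f | ∀ i, f i ∈ PSet κ l}, rfl, fun f hf => hf, fun g hg => ⟨g, hg, fun _ => subset_rfl⟩⟩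
  exact ⟨F, hdom, hF⟩

theorem domNum_le_of_tukey (Φ : (ι' → Set Ordinal.{0}) → ι → Set Ordinal.{0})
    (hΦ : ∀ h, (∀ j, h j ∈ PSet κ' l') → ∀ i, Φ h i ∈ PSet κ l)
    (hcover : ∀ g : ι → Set Ordinal.{0}, (∀ i, g i ∈ PSet κ l) →
      ∃ g' : ι' → Set Ordinal.{0}, (∀ j, g' j ∈ PSet κ' l') ∧
        ∀ h, (∀ j, g' j ⊆ h j) → ∀ i, g i ⊆ Φ h i) :
    domNum κ l ι ≤ domNum κ' l' ι' := by
  obtain ⟨H, ⟨hHval, hHdom⟩, hH⟩ := exists_isDominating_mk_eq_domNum κ' l' ι'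
  have hdom : IsDominating κ l (Φ '' H) := by
    refine ⟨?_, fun g hg => ?_⟩
    · rintro _ ⟨h, hH, rfl⟩
      exact hΦ h (hHval h hH)
    · obtain ⟨g', hg', hcov⟩ := hcover g hg
      obtain ⟨h, hH, hgh⟩ := hHdom g' hg'
      exact ⟨Φ h, ⟨h, hH, rfl⟩, hcov h hgh⟩
  calc domNum κ l ι ≤ #(Φ '' H) := domNum_le_mk hdom
    _ ≤ #H := mk_image_le
    _ = domNum κ' l' ι' := hH

theorem domNum_le_domNum (hκ : κ ≠ 0) (hl : l ≤ l') (hι : #ι ≤ #ι') :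
    domNum κ l ι ≤ domNum κ l' ι' := by
  obtain ⟨e⟩ := hι
  refine domNum_le_of_tukey (fun h i => h (e i) ∩ Iio l) (fun h hh i => ?_) (fun g hg => ?_)
  · exact ⟨inter_subset_right,
      (mk_le_mk_of_subset inter_subset_left).trans_lt (hh (e i)).2⟩
  · refine ⟨Function.extend e g (fun _ => ∅), fun j => ?_, fun h hgh i => ?_⟩
    · by_cases hj : ∃ i, e i = j
      · obtain ⟨i, rfl⟩ := hj
        rw [e.injective.extend_apply]
        exact ⟨(hg i).1.trans (Iio_subset_Iio hl), (hg i).2⟩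
      · rw [Function.extend_apply' _ _ _ hj]
        exact ⟨empty_subset _, by simpa [pos_iff_ne_zero] using hκ⟩
    · have := hgh (e i)
      rw [e.injective.extend_apply] at this
      exact subset_inter this (hg i).1

theorem domNum_eq_of_mk_eq (hκ : κ ≠ 0) (hι : #ι = #ι') : domNum κ l ι = domNum κ l ι' :=
  (domNum_le_domNum hκ le_rfl hι.le).antisymm (domNum_le_domNum hκ le_rfl hι.ge)

theorem lift_le_domNum [Nonempty ι] (hκ : κ.IsRegular) (hκl : κ.ord ≤ l) :
    Cardinal.lift.{max u 1} κ ≤ domNum κ l ι := by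
  obtain ⟨F, ⟨hFval, hFdom⟩, hF⟩ := exists_isDominating_mk_eq_domNum κ l ι
  obtain ⟨i₀⟩ := ‹Nonempty ι›
  rw [← hF]
  by_contra! hlt
  set A : Set (Set Ordinal.{0}) := (fun f => f i₀) '' F
  have hA : #A < Cardinal.lift.{1} κ := by
    refine Cardinal.lift_lt.{1, max u 1}.1 ?_
    calc Cardinal.lift.{max u 1} #A ≤ Cardinal.lift.{1} #F := mk_image_le_lift
      _ < _ := by rwa [Cardinal.lift_id', Cardinal.lift_lift]
  have hcover : Iio κ.ord ⊆ ⋃₀ A := by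
    intro ξ hξ
    obtain ⟨f, hf, hξf⟩ := hFdom (fun _ => {ξ}) fun _ =>
      mem_PSet_of_subsingleton (one_lt_aleph0.trans_le hκ.aleph0_le)
        (singleton_subset_iff.2 (hξ.trans_le hκl)) subsingleton_singleton
    exact ⟨f i₀, ⟨f, hf, rfl⟩, hξf i₀ rfl⟩
  have hunion : #(⋃₀ A) < Cardinal.lift.{1} κ := by
    rw [sUnion_eq_biUnion, card_biUnion_lt_iff_forall_of_isRegular hκ.lift hA]
    rintro _ ⟨f, hf, rfl⟩
    exact (hFval f hf i₀).2
  have := (mk_le_mk_of_subset hcover).trans_lt hunion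
  simp at this

end Dominating

section Products

universe u

variable {ι : Type u} {κ : Cardinal.{0}} {l : Ordinal.{0}}

theorem domNum_le_mul {σ ρ : Cardinal.{0}} (hκσ : κ ≤ σ) (hσρ : σ ≤ Order.succ ρ) :
    domNum κ l ι ≤ domNum κ ρ.ord ι * domNum σ l ι := by
  obtain ⟨F, ⟨hFval, hFdom⟩, hF⟩ := exists_isDominating_mk_eq_domNum κ ρ.ord ι
  obtain ⟨G, ⟨hGval, hGdom⟩, hG⟩ := exists_isDominating_mk_eq_domNum σ l ι
  have hemb : ∀ g ∈ G, ∀ i, Nonempty (g i ↪ Iio ρ.ord) := fun g hg i =>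
    nonempty_embedding_Iio_ord <| by
      simpa [lift_succ] using (hGval g hg i).2.trans_le (lift_le.2 hσρ)
  let E (g : G) (i : ι) : g.1 i ↪ Iio ρ.ord := (hemb g g.2 i).some
  -- the values of `g ∈ G` are coded into `ρ` by `E g`; `f ∈ F` selects the codes to keep
  let comb (p : F × G) (i : ι) : Set Ordinal.{0} :=
    Subtype.val '' ((fun x => (E p.2 i x : Ordinal)) ⁻¹' p.1.1 i)
  have hdom : IsDominating κ l (range comb) := by
    refine ⟨?_, fun g₀ hg₀ => ?_⟩
    · rintro _ ⟨⟨f, g⟩, rfl⟩ i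
      refine ⟨(Subtype.coe_image_subset _ _).trans (hGval g g.2 i).1, ?_⟩
      calc #(comb (f, g) i) ≤ #((fun x => (E g i x : Ordinal)) ⁻¹' f.1 i) := mk_image_le
        _ ≤ #(f.1 i) := mk_preimage_of_injective _ _
            (Subtype.val_injective.comp (E g i).injective)
        _ < _ := (hFval f f.2 i).2
    · obtain ⟨g, hg, hg₀g⟩ := hGdom g₀ fun i =>
        ⟨(hg₀ i).1, (hg₀ i).2.trans_le (lift_le.2 hκσ)⟩
      let codes (i : ι) : Set Ordinal.{0} :=
        (fun x => (E ⟨g, hg⟩ i x : Ordinal)) '' (Subtype.val ⁻¹' g₀ i)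
      obtain ⟨f, hf, hcodes⟩ := hFdom codes fun i => by
        refine ⟨image_subset_iff.2 fun x _ => (E ⟨g, hg⟩ i x).2, ?_⟩
        exact mk_image_le.trans_lt
          ((mk_preimage_of_injective _ _ Subtype.val_injective).trans_lt (hg₀ i).2)
      refine ⟨comb (⟨f, hf⟩, ⟨g, hg⟩), ⟨_, rfl⟩, fun i x hx => ?_⟩
      exact ⟨⟨x, hg₀g i hx⟩, hcodes i ⟨_, hx, rfl⟩, rfl⟩
  calc domNum κ l ι ≤ #(range comb) := domNum_le_mk hdom
    _ ≤ #(F × G) := mk_range_le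
    _ = domNum κ ρ.ord ι * domNum σ l ι := by rw [mk_prod, lift_id, lift_id, hF, hG]

end Products

section Reindexing

variable {ι : Type 1} {κ ρ : Cardinal.{0}} {l : Ordinal.{0}}

theorem domNum_succ_le (hκ : 1 < κ) (hκρ : κ ≤ Order.succ ρ) (hρ : ℵ₀ ≤ ρ) :
    domNum (Order.succ ρ) l ι ≤ domNum κ l (ι × Iio ρ.ord) := by
  refine domNum_le_of_tukey (fun h i => ⋃ j, h (i, j)) (fun h hh i => ?_) (fun g hg => ?_)
  · refine ⟨iUnion_subset fun j => (hh (i, j)).1, ?_⟩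
    rw [card_iUnion_lt_iff_forall_of_isRegular (isRegular_succ hρ).lift]
    · exact fun j => (hh (i, j)).2.trans_le (lift_le.2 hκρ)
    · simp [Cardinal.mk_Iio_ordinal]
  · have E (i : ι) : g i ↪ Iio ρ.ord :=
      (nonempty_embedding_Iio_ord (by simpa [lift_succ] using (hg i).2)).some
    refine ⟨fun p => Subtype.val '' (E p.1 ⁻¹' {p.2}),
      fun p => image_val_preimage_singleton_mem_PSet hκ (hg p.1).1 _ _,
      fun h hgh i x hx => mem_iUnion.2 ⟨E i ⟨x, hx⟩, hgh (i, _) ⟨⟨x, hx⟩, rfl, rfl⟩⟩⟩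

theorem domNum_le_of_isRegular (hκ : 1 < κ) (hκρ : κ ≤ ρ) (hρ : ρ.IsRegular) (hρl : ρ.ord ≤ l) :
    domNum ρ l ι ≤ domNum κ l (ι × Option (Iio ρ.ord)) := by
  have hlt (s : Set Ordinal.{0}) (hs : s ∈ PSet κ l) : #s < Cardinal.lift.{1} ρ :=
    hs.2.trans_le (lift_le.2 hκρ)
  refine domNum_le_of_tukey (fun h i => ⋃ o ∈ h (i, none) ∩ Iio ρ.ord,
      ⋃ j ∈ {j : Iio ρ.ord | (j : Ordinal) < o}, h (i, some j)) (fun h hh i => ?_) (fun g hg => ?_)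
  · refine ⟨iUnion₂_subset fun _ _ => iUnion₂_subset fun j _ => (hh (i, some j)).1, ?_⟩
    rw [card_biUnion_lt_iff_forall_of_isRegular hρ.lift
      ((mk_le_mk_of_subset inter_subset_left).trans_lt (hlt _ (hh (i, none))))]
    intro o ho
    refine (card_biUnion_lt_iff_forall_of_isRegular hρ.lift ?_).2
      fun j _ => hlt _ (hh (i, some j))
    calc #{j : Iio ρ.ord | (j : Ordinal) < o}
        _ = #(Subtype.val '' {j : Iio ρ.ord | (j : Ordinal) < o}) :=
          (mk_image_eq Subtype.val_injective).symm
        _ ≤ #(Iio o) := mk_le_mk_of_subset (image_subset_iff.2 fun _ hj => hj)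
        _ < Cardinal.lift.{1} ρ := by
          rw [Cardinal.mk_Iio_ordinal, lift_lt]
          exact lt_ord.1 ho.2
  · choose o ho E hE using fun i => exists_embedding_Iio_ord_bounded (hg i).2
    -- slot `none` holds a bound `o i < ρ` on the codes of `g i`,
    -- slot `some j` the element coded by `j`
    refine ⟨fun | (i, none) => {o i} | (i, some j) => Subtype.val '' (E i ⁻¹' {j}), ?_, ?_⟩
    · rintro ⟨i, _ | j⟩
      · exact mem_PSet_of_subsingleton hκ (singleton_subset_iff.2 ((ho i).trans_le hρl))
          subsingleton_singleton
      · exact image_val_preimage_singleton_mem_PSet hκ (hg i).1 _ _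
    · intro h hgh i x hx
      simp only [mem_iUnion]
      exact ⟨o i, ⟨hgh (i, none) rfl, ho i⟩, E i ⟨x, hx⟩, hE i _,
        hgh (i, some _) ⟨⟨x, hx⟩, rfl, rfl⟩⟩

end Reindexing

theorem mul_le_dNum {κ ρ lam μ : Cardinal.{0}} {d : Cardinal.{1}} (hκ : κ.IsRegular) (hκρ : κ ≤ ρ)
    (hρl : ρ ≤ lam) (hμ : μ ≠ 0) (hd : d ≤ dNum κ lam.ord (Cardinal.lift.{1} (μ * ρ))) :
    dNum κ ρ.ord (Cardinal.lift.{1} μ) * d ≤ dNum κ lam.ord (Cardinal.lift.{1} (μ * ρ)) := by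
  have hρ : ρ ≠ 0 := (hκ.pos.trans_le hκρ).ne'
  have : Nonempty (Cardinal.lift.{1} (μ * ρ)).ord.ToType :=
    mk_ne_zero_iff.1 (by simp [hμ, hρ])
  have hinf : ℵ₀ ≤ dNum κ lam.ord (Cardinal.lift.{1} (μ * ρ)) :=
    (aleph0_le_lift.2 hκ.aleph0_le).trans (lift_le_domNum hκ (ord_le_ord.2 (hκρ.trans hρl)))
  have hle : dNum κ ρ.ord (Cardinal.lift.{1} μ) ≤ dNum κ lam.ord (Cardinal.lift.{1} (μ * ρ)) :=
    domNum_le_domNum hκ.pos.ne' (ord_le_ord.2 hρl)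
      (by simpa using le_mul_right (by simpa using hρ))
  calc dNum κ ρ.ord (Cardinal.lift.{1} μ) * d
      _ ≤ dNum κ lam.ord (Cardinal.lift.{1} (μ * ρ)) * dNum κ lam.ord (Cardinal.lift.{1} (μ * ρ)) :=
        mul_le_mul' hle hd
      _ = dNum κ lam.ord (Cardinal.lift.{1} (μ * ρ)) := mul_eq_self hinf

theorem stmt19_general (κ lam μ : Cardinal.{0})
    (hκ : κ.IsRegular) (hμ0 : μ ≠ 0) :
    (∀ ρ : Cardinal.{0}, κ ≤ ρ → ρ < lam →
      dNum κ lam.ord (Cardinal.lift.{1} μ) ≤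
          dNum κ ρ.ord (Cardinal.lift.{1} μ) * dNum (Order.succ ρ) lam.ord (Cardinal.lift.{1} μ) ∧
        dNum κ ρ.ord (Cardinal.lift.{1} μ) * dNum (Order.succ ρ) lam.ord (Cardinal.lift.{1} μ) ≤
          dNum κ lam.ord (Cardinal.lift.{1} (μ * ρ))) ∧
    (∀ ρ : Cardinal.{0}, ρ.IsRegular → κ ≤ ρ → ρ ≤ lam →
      dNum κ lam.ord (Cardinal.lift.{1} μ) ≤
          dNum κ ρ.ord (Cardinal.lift.{1} μ) * dNum ρ lam.ord (Cardinal.lift.{1} μ) ∧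
        dNum κ ρ.ord (Cardinal.lift.{1} μ) * dNum ρ lam.ord (Cardinal.lift.{1} μ) ≤
          dNum κ lam.ord (Cardinal.lift.{1} (μ * ρ))) := by
  have hκ1 : 1 < κ := one_lt_aleph0.trans_le hκ.aleph0_le
  refine ⟨fun ρ hκρ hρl => ⟨domNum_le_mul (hκρ.trans (Order.le_succ ρ)) le_rfl,
    mul_le_dNum hκ hκρ hρl.le hμ0 ?_⟩, fun ρ hρ hκρ hρl => ⟨domNum_le_mul hκρ (Order.le_succ ρ),
    mul_le_dNum hκ hκρ hρl hμ0 ?_⟩⟩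
  · calc dNum (Order.succ ρ) lam.ord (Cardinal.lift.{1} μ)
      _ ≤ domNum κ lam.ord ((Cardinal.lift.{1} μ).ord.ToType × Iio ρ.ord) :=
        domNum_succ_le hκ1 (hκρ.trans (Order.le_succ ρ)) (hκ.aleph0_le.trans hκρ)
      _ = dNum κ lam.ord (Cardinal.lift.{1} (μ * ρ)) :=
        domNum_eq_of_mk_eq hκ.pos.ne' (by simp [Cardinal.mk_Iio_ordinal])
  · calc dNum ρ lam.ord (Cardinal.lift.{1} μ)
      _ ≤ domNum κ lam.ord ((Cardinal.lift.{1} μ).ord.ToType × Option (Iio ρ.ord)) :=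
        domNum_le_of_isRegular hκ1 hκρ hρ (ord_le_ord.2 hρl)
      _ = dNum κ lam.ord (Cardinal.lift.{1} (μ * ρ)) :=
        domNum_eq_of_mk_eq hκ.pos.ne' (by
          simp [Cardinal.mk_Iio_ordinal, add_one_eq (aleph0_le_lift.2 hρ.aleph0_le)])

/-- Let `μ` be a nonzero cardinal. Then
(0) `𝔡^μ_{κ,λ} ≤ 𝔡^μ_{κ,ρ} · 𝔡^μ_{ρ⁺,λ} ≤ 𝔡^{μ·ρ}_{κ,λ}` for every cardinal `ρ` with
`κ ≤ ρ < λ`, and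
(1) `𝔡^μ_{κ,λ} ≤ 𝔡^μ_{κ,ρ} · 𝔡^μ_{ρ,λ} ≤ 𝔡^{μ·ρ}_{κ,λ}` for every regular cardinal `ρ` with
`κ ≤ ρ ≤ λ`. -/
theorem stmt19 (κ lam μ : Cardinal.{0})
    (hκ : κ.IsRegular) (hkl : κ ≤ lam) (hμ0 : μ ≠ 0) :
    (∀ ρ : Cardinal.{0}, κ ≤ ρ → ρ < lam →
      dNum κ lam.ord (Cardinal.lift.{1} μ) ≤
          dNum κ ρ.ord (Cardinal.lift.{1} μ) * dNum (Order.succ ρ) lam.ord (Cardinal.lift.{1} μ) ∧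
        dNum κ ρ.ord (Cardinal.lift.{1} μ) * dNum (Order.succ ρ) lam.ord (Cardinal.lift.{1} μ) ≤
          dNum κ lam.ord (Cardinal.lift.{1} (μ * ρ))) ∧
    (∀ ρ : Cardinal.{0}, ρ.IsRegular → κ ≤ ρ → ρ ≤ lam →
      dNum κ lam.ord (Cardinal.lift.{1} μ) ≤
          dNum κ ρ.ord (Cardinal.lift.{1} μ) * dNum ρ lam.ord (Cardinal.lift.{1} μ) ∧
        dNum κ ρ.ord (Cardinal.lift.{1} μ) * dNum ρ lam.ord (Cardinal.lift.{1} μ) ≤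
          dNum κ lam.ord (Cardinal.lift.{1} (μ * ρ))) :=
  stmt19_general κ lam μ hκ hμ0

end PklNormal
end
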